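/- Let P be a formula-based program. Then the interpretation M_P is a fixed point of the immediate consequence operator: T_P(M_P) = M_P. -/

import Mathlib

/-!
Infinite-valued semantics for formula-based logic programs
(Rondogiannis–Wadge style), following Lüdecke,
"Every Formula-Based Logic Program Has a Least Infinite-Valued Model".
-/

noncomputable section

namespace ILP

attribute [local instance] Classical.propDecidable

/-- The first uncountable ordinal. -/
def omega1 : Ordinal.{0} := Ordinal.omega 1

lemma omega1_isLimit : Order.IsSuccLimit omega1 := Cardinal.isSuccLimit_omega 1

lemma zero_lt_omega1 : (0 : Ordinal) < omega1 := omega1_isLimit.pos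

lemma succ_lt_omega1 {a : Ordinal} (h : a < omega1) : a + 1 < omega1 := by
  rw [Ordinal.add_one_eq_succ]
  exact omega1_isLimit.succ_lt h

/-- Pre-truth-values: `F α`, `0`, `T α` for arbitrary ordinals `α`. -/
inductive TVPre : Type 1 where
  | F : Ordinal → TVPre
  | zero : TVPre
  | T : Ordinal → TVPre

/-- A pre-truth-value is countable if its index is a countable ordinal. -/
def TVPre.countable : TVPre → Prop
  | .F a => a < omega1
  | .zero => True
  | .T a => a < omega1

/-- The set `W` of truth values:
`F_α` (false values) for countable `α`, `0`, and `T_α` (true values) for countable `α`. -/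
def W : Type 1 := {v : TVPre // v.countable}

/-- The strict order on truth values:
`F_0 < F_1 < ... < 0 < ... < T_1 < T_0`. -/
def TVPre.lt : TVPre → TVPre → Prop
  | .F a, .F b => a < b
  | .F _, .zero => True
  | .F _, .T _ => True
  | .zero, .T _ => True
  | .T a, .T b => b < a
  | _, _ => False

instance : LT W := ⟨fun x y => TVPre.lt x.1 y.1⟩

instance : LE W := ⟨fun x y => x = y ∨ x < y⟩

lemma TVPre.lt_trans {a b c : TVPre} (hab : a.lt b) (hbc : b.lt c) : a.lt c := by
  cases a <;> cases b <;> cases c <;> simp_all [TVPre.lt] <;>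
    first | exact hab.trans hbc | exact hbc.trans hab

lemma TVPre.lt_irrefl {a : TVPre} (h : a.lt a) : False := by
  cases a <;> simp_all [TVPre.lt]

instance instLinearOrderW : LinearOrder W where
  le_refl a := Or.inl rfl
  le_trans a b c hab hbc := by
    rcases hab with rfl | hab
    · exact hbc
    rcases hbc with rfl | hbc
    · exact Or.inr hab
    · exact Or.inr (TVPre.lt_trans hab hbc)
  le_antisymm a b hab hba := by
    rcases hab with rfl | hab
    · rfl
    rcases hba with rfl | hba
    · rfl
    exact absurd (TVPre.lt_trans hab hba) TVPre.lt_irrefl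
  le_total a b := by
    obtain ⟨a1, ha⟩ := a
    obtain ⟨b1, hb⟩ := b
    have tri : a1 = b1 ∨ a1.lt b1 ∨ b1.lt a1 := by
      cases a1 <;> cases b1 <;> simp [TVPre.lt] <;> (try rename_i x y) <;>
        (try rcases lt_trichotomy x y with h | h | h) <;> tauto
    rcases tri with h | h | h
    · exact Or.inl (Or.inl (Subtype.ext h))
    · exact Or.inl (Or.inr h)
    · exact Or.inr (Or.inr h)
  lt_iff_le_not_ge a b := by
    constructor
    · intro h
      refine ⟨Or.inr h, ?_⟩
      rintro (rfl | h')
      · exact TVPre.lt_irrefl h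
      · exact TVPre.lt_irrefl (TVPre.lt_trans h h')
    · rintro ⟨rfl | h, h2⟩
      · exact absurd (Or.inl rfl) h2
      · exact h
  toDecidableLE := Classical.decRel _

/-- The false value `F_α`. -/
def WF (a : Ordinal) (h : a < omega1) : W := ⟨.F a, h⟩

/-- The true value `T_α`. -/
def WT (a : Ordinal) (h : a < omega1) : W := ⟨.T a, h⟩

/-- The undefined value `0`. -/
def WZ : W := ⟨.zero, trivial⟩

/-- `deg w < α` : the degree of `w` (which is `∞` for `0`) is less than `α`. -/
def degLT (w : W) (α : Ordinal) : Prop :=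
  match w.1 with
  | .F a => a < α
  | .zero => False
  | .T a => a < α

/-- The set of indices of true values occurring in `M`. -/
def TIdx (M : Set W) : Set Ordinal := {a | ∃ w ∈ M, w.1 = TVPre.T a}

/-- The set of indices of false values occurring in `M`. -/
def FIdx (M : Set W) : Set Ordinal := {a | ∃ w ∈ M, w.1 = TVPre.F a}

lemma mem_lt_omega1_of_TIdx {M : Set W} {a : Ordinal} (h : a ∈ TIdx M) : a < omega1 := by
  obtain ⟨w, _, hw⟩ := h
  have := w.2
  rw [hw] at this
  exact this

lemma mem_lt_omega1_of_FIdx {M : Set W} {a : Ordinal} (h : a ∈ FIdx M) : a < omega1 := by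
  obtain ⟨w, _, hw⟩ := h
  have := w.2
  rw [hw] at this
  exact this

/-- The least upper bound of a subset of `W`. -/
def Wsup (M : Set W) : W :=
  if h : (TIdx M).Nonempty then
    WT (sInf (TIdx M))
      (lt_of_le_of_lt (csInf_le' h.choose_spec) (mem_lt_omega1_of_TIdx h.choose_spec))
  else if WZ ∈ M then WZ
  else if h2 : sSup (FIdx M) < omega1 then WF (sSup (FIdx M)) h2
  else WZ

/-- The greatest lower bound of a subset of `W`. -/
def Winf (M : Set W) : W :=
  if h : (FIdx M).Nonempty then
    WF (sInf (FIdx M))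
      (lt_of_le_of_lt (csInf_le' h.choose_spec) (mem_lt_omega1_of_FIdx h.choose_spec))
  else if WZ ∈ M then WZ
  else if h2 : sSup (TIdx M) < omega1 then WT (sSup (TIdx M)) h2
  else WZ

/-- The semantics of negation on `W`. -/
def Wneg : W → W
  | ⟨.F a, h⟩ => WT (a + 1) (succ_lt_omega1 h)
  | ⟨.zero, _⟩ => WZ
  | ⟨.T a, h⟩ => WF (a + 1) (succ_lt_omega1 h)

/-! ### Syntax -/

/-- A first-order language with finitely many predicate symbols (at least one),
finitely many function symbols and finitely many constants (at least one). -/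
structure Language where
  nPred : ℕ
  predAr : Fin nPred → ℕ
  nFun : ℕ
  funAr : Fin nFun → ℕ
  nConst : ℕ
  npos : 1 ≤ nPred
  cpos : 1 ≤ nConst

variable {L : Language}

/-- Terms of the language; variables are indexed by natural numbers. -/
inductive Term (L : Language) : Type where
  | var : ℕ → Term L
  | const : Fin L.nConst → Term L
  | func : (f : Fin L.nFun) → (Fin (L.funAr f) → Term L) → Term L

/-- A term is ground if it contains no variables. -/
def Term.ground : Term L → Prop
  | .var _ => False
  | .const _ => True
  | .func _ ts => ∀ i, (ts i).ground

/-- The Herbrand universe: the set of ground terms. -/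
def HU (L : Language) : Type := {t : Term L // t.ground}

/-- Formulas of the language. -/
inductive Formula (L : Language) : Type where
  | verum : Formula L
  | falsum : Formula L
  | atom : (p : Fin L.nPred) → (Fin (L.predAr p) → Term L) → Formula L
  | neg : Formula L → Formula L
  | conj : Formula L → Formula L → Formula L
  | disj : Formula L → Formula L → Formula L
  | all : ℕ → Formula L → Formula L
  | ex : ℕ → Formula L → Formula L

/-- A ground atom: a predicate symbol applied to ground terms.
The Herbrand base `H_B` is the type of ground atoms. -/
structure GroundAtom (L : Language) : Type where
  pred : Fin L.nPred
  args : Fin (L.predAr pred) → HU L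

/-- An (infinite-valued Herbrand) interpretation. -/
def Interp (L : Language) : Type 1 := GroundAtom L → W

/-- Evaluation of a term under a variable assignment. -/
def Term.evalT (h : ℕ → HU L) : Term L → HU L
  | .var n => h n
  | .const c => ⟨.const c, trivial⟩
  | .func f ts => ⟨.func f fun i => ((ts i).evalT h).1, fun i => ((ts i).evalT h).2⟩

/-- The infinite-valued semantics of formulas, relative to an interpretation and
a variable assignment. -/
def Formula.eval (I : Interp L) : Formula L → (ℕ → HU L) → W
  | .verum, _ => WT 0 zero_lt_omega1
  | .falsum, _ => WF 0 zero_lt_omega1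
  | .atom p ts, h => I ⟨p, fun i => (ts i).evalT h⟩
  | .neg φ, h => Wneg (φ.eval I h)
  | .conj φ ψ, h => min (φ.eval I h) (ψ.eval I h)
  | .disj φ ψ, h => max (φ.eval I h) (ψ.eval I h)
  | .ex v φ, h => Wsup (Set.range fun u : HU L => φ.eval I (Function.update h v u))
  | .all v φ, h => Winf (Set.range fun u : HU L => φ.eval I (Function.update h v u))

/-- The variables occurring in a term. -/
def Term.vars : Term L → Set ℕ
  | .var n => {n}
  | .const _ => ∅
  | .func _ ts => ⋃ i, (ts i).vars

/-- The free variables of a formula. -/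
def Formula.freeVars : Formula L → Set ℕ
  | .verum => ∅
  | .falsum => ∅
  | .atom _ ts => ⋃ i, (ts i).vars
  | .neg φ => φ.freeVars
  | .conj φ ψ => φ.freeVars ∪ ψ.freeVars
  | .disj φ ψ => φ.freeVars ∪ ψ.freeVars
  | .all v φ => φ.freeVars \ {v}
  | .ex v φ => φ.freeVars \ {v}

/-- Applying a substitution to a term. -/
def Term.subst (σ : ℕ → Term L) : Term L → Term L
  | .var n => σ n
  | .const c => .const c
  | .func f ts => .func f fun i => (ts i).subst σ

/-- Applying a substitution to a formula (bound variables are not substituted). -/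
def Formula.subst (σ : ℕ → Term L) : Formula L → Formula L
  | .verum => .verum
  | .falsum => .falsum
  | .atom p ts => .atom p fun i => (ts i).subst σ
  | .neg φ => .neg (φ.subst σ)
  | .conj φ ψ => .conj (φ.subst σ) (ψ.subst σ)
  | .disj φ ψ => .disj (φ.subst σ) (ψ.subst σ)
  | .all v φ => .all v (φ.subst (Function.update σ v (Term.var v)))
  | .ex v φ => .ex v (φ.subst (Function.update σ v (Term.var v)))

/-- A formula-based rule `A ← φ`: the head is an atom `P(t₁,…,tₛ)`
(hence distinct from `⊤` and `⊥`) and the body is an arbitrary formula. -/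
structure Rule (L : Language) : Type where
  headPred : Fin L.nPred
  headArgs : Fin (L.predAr headPred) → Term L
  body : Formula L

/-- The head of a rule, as an atomic formula. -/
def Rule.headAtom (r : Rule L) : Formula L := .atom r.headPred r.headArgs

/-- A formula-based logic program: a finite set of formula-based rules. -/
structure Program (L : Language) : Type where
  rules : Set (Rule L)
  finite : rules.Finite

/-- The set `P_G` of ground instances of a program `P`: pairs `(Aσ, φσ)` obtained
from a rule `A ← φ` of `P` and a substitution `σ` such that `Aσ` is a ground atom
and `φσ` has no free variables. -/
def groundInstances (P : Program L) : Set (GroundAtom L × Formula L) :=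
  {Aφ | ∃ r ∈ P.rules, ∃ σ : ℕ → Term L,
    (∃ hg : ∀ i, ((r.headArgs i).subst σ).ground,
      Aφ.1 = ⟨r.headPred, fun i => ⟨(r.headArgs i).subst σ, hg i⟩⟩) ∧
    Aφ.2 = r.body.subst σ ∧ (r.body.subst σ).freeVars = ∅}

/-- A default variable assignment (possible since there is at least one constant). -/
def defaultAssignment (L : Language) : ℕ → HU L :=
  fun _ => ⟨.const ⟨0, L.cpos⟩, trivial⟩

/-- The value of a closed formula (independent of the variable assignment). -/
def Formula.evalClosed (I : Interp L) (φ : Formula L) : W :=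
  φ.eval I (defaultAssignment L)

/-- The immediate consequence operator `T_P`. -/
def TP (P : Program L) (I : Interp L) : Interp L :=
  fun A => Wsup {w | ∃ φ : Formula L, (A, φ) ∈ groundInstances P ∧ w = φ.evalClosed I}

/-- `I ∥ F_β` : the set of ground atoms receiving value `F_β` under `I`. -/
def Ifalse (I : Interp L) (β : Ordinal) : Set (GroundAtom L) := {A | (I A).1 = TVPre.F β}

/-- `I ∥ T_β` : the set of ground atoms receiving value `T_β` under `I`. -/
def Itrue (I : Interp L) (β : Ordinal) : Set (GroundAtom L) := {A | (I A).1 = TVPre.T β}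

/-- `I =_α J`. -/
def eqa (α : Ordinal) (I J : Interp L) : Prop :=
  ∀ β ≤ α, Ifalse I β = Ifalse J β ∧ Itrue I β = Itrue J β

/-- `I ⊑_α J`. -/
def sqa (α : Ordinal) (I J : Interp L) : Prop :=
  (∀ β < α, eqa β I J) ∧ Ifalse J α ⊆ Ifalse I α ∧ Itrue I α ⊆ Itrue J α

/-- `I ⊏_α J`. -/
def sqlt (α : Ordinal) (I J : Interp L) : Prop := sqa α I J ∧ ¬ eqa α I J

/-- `I ⊑_∞ J`. -/
def sqinf (I J : Interp L) : Prop := I = J ∨ ∃ α < omega1, sqlt α I J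

/-- `I` satisfies the rule `A ← φ`. -/
def satisfies (I : Interp L) (r : Rule L) : Prop :=
  ∀ h : ℕ → HU L, r.body.eval I h ≤ r.headAtom.eval I h

/-- `I` is a model of `P`. -/
def isModel (I : Interp L) (P : Program L) : Prop := ∀ r ∈ P.rules, satisfies I r

/-- The transfinite iterates `T^β_{P,α}(I)`. -/
def iter (P : Program L) (α : Ordinal) (hα : α < omega1) (I : Interp L)
    (β : Ordinal) : Interp L :=
  Ordinal.limitRecOn β I (fun _ J => TP P J)
    (fun β _ ih A =>
      if degLT (I A) α then I A
      else if ∃ γ, ∃ hγ : γ < β, (ih γ hγ A).1 = TVPre.T α then WT α hα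
      else if ∀ γ, ∀ hγ : γ < β, (ih γ hγ A).1 = TVPre.F α then WF α hα
      else WF (α + 1) (succ_lt_omega1 hα))

/-- The union `⊔_{γ<α} I_γ` of a family of interpretations. -/
def unionInterp (α : Ordinal) (hα : α < omega1) (Ig : ∀ γ, γ < α → Interp L) :
    Interp L := fun A =>
  if h : ∃ ζ, ∃ hζ : ζ < α, ((Ig ζ hζ) A).1 = TVPre.F ζ ∨ ((Ig ζ hζ) A).1 = TVPre.T ζ
  then Ig h.choose h.choose_spec.choose A
  else WF α hα

/-- The approximants `M_α` of a program `P`. -/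
def approx (P : Program L) (α : Ordinal) : Interp L :=
  if hα : α < omega1 then
    if (∀ γ, ∀ _ : γ < α, ∀ ζ, ζ < γ → eqa ζ (approx P ζ) (approx P γ)) ∧
        sqa α (unionInterp α hα fun γ _ => approx P γ)
          (TP P (unionInterp α hα fun γ _ => approx P γ))
    then iter P α hα (unionInterp α hα fun γ _ => approx P γ) omega1
    else fun _ => WF 0 zero_lt_omega1
  else fun _ => WF 0 zero_lt_omega1
termination_by α
decreasing_by
  all_goals first | assumption | exact lt_trans ‹_› ‹_›

/-- The depth `δ_P` of a program `P`. -/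
def depth (P : Program L) : Ordinal :=
  sInf {δ | δ < omega1 ∧ ∀ γ, δ ≤ γ → γ < omega1 →
    Ifalse (approx P γ) γ = ∅ ∧ Itrue (approx P γ) γ = ∅}

/-- The least infinite-valued model `M_P` of a program `P`. -/
def MP (P : Program L) : Interp L := fun A =>
  if degLT (approx P (depth P) A) (depth P) then approx P (depth P) A else WZ

/-! ### Three-valued semantics -/

/-- The three truth values `F < 0 < T`. -/
inductive TV3 : Type where
  | F : TV3
  | Z : TV3
  | T : TV3
deriving DecidableEq

/-- Numeric coding of the three truth values. -/
def TV3.toNat : TV3 → ℕ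
  | .F => 0
  | .Z => 1
  | .T => 2

instance : LinearOrder TV3 :=
  LinearOrder.lift' TV3.toNat (fun a b => by
    cases a <;> cases b <;> simp [TV3.toNat])

/-- A three-valued interpretation. -/
def Interp3 (L : Language) : Type := GroundAtom L → TV3

/-- Supremum of a set of three-valued truth values. -/
def sup3 (S : Set TV3) : TV3 :=
  if TV3.T ∈ S then .T else if TV3.Z ∈ S then .Z else .F

/-- Infimum of a set of three-valued truth values. -/
def inf3 (S : Set TV3) : TV3 :=
  if TV3.F ∈ S then .F else if TV3.Z ∈ S then .Z else .T

/-- Three-valued negation. -/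
def neg3 : TV3 → TV3
  | .F => .T
  | .Z => .Z
  | .T => .F

/-- The three-valued semantics of formulas. -/
def Formula.eval3 (K : Interp3 L) : Formula L → (ℕ → HU L) → TV3
  | .verum, _ => .T
  | .falsum, _ => .F
  | .atom p ts, h => K ⟨p, fun i => (ts i).evalT h⟩
  | .neg φ, h => neg3 (φ.eval3 K h)
  | .conj φ ψ, h => min (φ.eval3 K h) (ψ.eval3 K h)
  | .disj φ ψ, h => max (φ.eval3 K h) (ψ.eval3 K h)
  | .ex v φ, h => sup3 (Set.range fun u : HU L => φ.eval3 K (Function.update h v u))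
  | .all v φ, h => inf3 (Set.range fun u : HU L => φ.eval3 K (Function.update h v u))

/-- Collapsing all false values to `F` and all true values to `T`. -/
def collapse : W → TV3 := fun w =>
  match w.1 with
  | .F _ => .F
  | .zero => .Z
  | .T _ => .T

/-- The collapse of an infinite-valued interpretation. -/
def collapseI (I : Interp L) : Interp3 L := fun A => collapse (I A)

/-- `K` is a three-valued model of `P`. -/
def isModel3 (K : Interp3 L) (P : Program L) : Prop :=
  ∀ r ∈ P.rules, ∀ h : ℕ → HU L, r.body.eval3 K h ≤ r.headAtom.eval3 K h

/-- The three-valued interpretation `M_{P,3}`. -/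
def MP3 (P : Program L) : Interp3 L := collapseI (MP P)

/-- The negation degree of a formula. -/
def Formula.negDeg : Formula L → ℕ
  | .verum => 0
  | .falsum => 0
  | .atom _ _ => 0
  | .neg φ => φ.negDeg + 1
  | .conj φ ψ => max φ.negDeg ψ.negDeg
  | .disj φ ψ => max φ.negDeg ψ.negDeg
  | .all _ φ => φ.negDeg
  | .ex _ φ => φ.negDeg


/-!
Everything is compared atom by atom. For single truth values, `⊑_α` is preserved by negation
and by least upper and greatest lower bounds in the complete linear order `W`: a bound of degree
below `α` is determined by the values of degree below `α`, since a supremum `T_β` is attained and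
a supremum `F_β` only involves values `≤ F_β`. Hence formulas and `T_P` are `⊑_α`-monotone.

By induction on `α < ω₁`, `M_α` agrees with every earlier `M_ζ` up to level `ζ` and
`M_α =_α T_P(M_α)`. The union of the earlier approximants is a `⊑_α`-prefixpoint of `T_P`, so its
iterates form a `⊑_α`-chain; along it each atom changes its level-`α` status (`F_α`, strictly
between, `T_α`) at most twice, and there are countably many atoms, so the chain is stationary
from some countable stage on and its `ω₁`-th member is an `=_α`-fixed point. By coherence,
distinct levels `γ` at which some atom has degree exactly `γ` are witnessed by distinct atoms, so
there are countably many of them and the depth `δ_P` exists. Finally `M_P =_γ M_γ` for all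
`γ ≥ δ_P`, hence `T_P(M_P) =_γ M_P` at every countable level, which forces equality.
-/

/-! ### Truth values -/

namespace W

@[elab_as_elim, induction_eliminator]
theorem ind {motive : W → Prop} (F : ∀ a h, motive (WF a h)) (zero : motive WZ)
    (T : ∀ a h, motive (WT a h)) (v : W) : motive v := by
  obtain ⟨_ | _ | a, h⟩ := v
  exacts [F _ h, zero, T _ h]

@[simp] lemma val_WF {a h} : (WF a h).1 = .F a := rfl
@[simp] lemma val_WZ : WZ.1 = .zero := rfl
@[simp] lemma val_WT {a h} : (WT a h).1 = .T a := rfl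

lemma ext_iff {v w : W} : v = w ↔ v.1 = w.1 := Subtype.ext_iff

@[simp] lemma WF_inj {a b h h'} : WF a h = WF b h' ↔ a = b := by simp [ext_iff]
@[simp] lemma WT_inj {a b h h'} : WT a h = WT b h' ↔ a = b := by simp [ext_iff]

@[simp] lemma WF_lt_WF {a b h h'} : WF a h < WF b h' ↔ a < b := Iff.rfl
@[simp] lemma WT_lt_WT {a b h h'} : WT a h < WT b h' ↔ b < a := Iff.rfl
@[simp] lemma WF_lt_WZ {a h} : WF a h < WZ := trivial
@[simp] lemma WF_lt_WT {a b h h'} : WF a h < WT b h' := trivial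
@[simp] lemma WZ_lt_WT {a h} : WZ < WT a h := trivial

@[simp] lemma WF_le_WF {a b h h'} : WF a h ≤ WF b h' ↔ a ≤ b := by
  simp [le_iff_lt_or_eq, or_comm]
@[simp] lemma WT_le_WT {a b h h'} : WT a h ≤ WT b h' ↔ b ≤ a := by
  simp [le_iff_lt_or_eq, or_comm, eq_comm]
@[simp] lemma WF_le_WZ {a h} : WF a h ≤ WZ := WF_lt_WZ.le
@[simp] lemma WF_le_WT {a b h h'} : WF a h ≤ WT b h' := WF_lt_WT.le
@[simp] lemma WZ_le_WT {a h} : WZ ≤ WT a h := WZ_lt_WT.le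
@[simp] lemma not_WZ_lt_WF {a h} : ¬ WZ < WF a h := not_lt.2 WF_le_WZ
@[simp] lemma not_WT_lt_WF {a b h h'} : ¬ WT a h < WF b h' := not_lt.2 WF_le_WT
@[simp] lemma not_WT_lt_WZ {a h} : ¬ WT a h < WZ := not_lt.2 WZ_le_WT
@[simp] lemma not_WZ_le_WF {a h} : ¬ WZ ≤ WF a h := not_le.2 WF_lt_WZ
@[simp] lemma not_WT_le_WF {a b h h'} : ¬ WT a h ≤ WF b h' := not_le.2 WF_lt_WT

lemma eq_WF_of_val {v : W} {a : Ordinal} (h : v.1 = .F a) :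
    v = WF a (by have := v.2; rwa [h] at this) := ext_iff.2 h

lemma eq_WT_of_val {v : W} {a : Ordinal} (h : v.1 = .T a) :
    v = WT a (by have := v.2; rwa [h] at this) := ext_iff.2 h

def deg (w : W) : WithTop Ordinal :=
  match w.1 with
  | .F a => a
  | .zero => ⊤
  | .T a => a

@[simp] lemma deg_WF {a h} : (WF a h).deg = a := rfl
@[simp] lemma deg_WZ : WZ.deg = ⊤ := rfl
@[simp] lemma deg_WT {a h} : (WT a h).deg = a := rfl

variable {v w : W} {α β γ : Ordinal}

lemma deg_eq_iff : v.deg = β ↔ v.1 = .F β ∨ v.1 = .T β := by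
  induction v <;> simp

lemma val_ne_of_lt_deg (h : ↑β < v.deg) : v.1 ≠ .F β ∧ v.1 ≠ .T β := by
  induction v <;> simp_all [ne_of_gt]

lemma exists_deg_eq_of_deg_lt (h : v.deg < γ) : ∃ β < γ, v.deg = β := by
  induction v <;> simp_all

lemma add_one_le_deg (h : ↑γ < v.deg) : ↑(γ + 1) ≤ v.deg := by
  induction v with
  | zero => exact le_top
  | _ => exact WithTop.coe_le_coe.2 (Order.add_one_le_of_lt (WithTop.coe_lt_coe.1 h))

lemma deg_le_of_le_WF {a h} (hv : v ≤ WF a h) : v.deg ≤ a := by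
  induction v <;> simp_all

lemma deg_lt_of_WT_lt {a h} (hv : WT a h < v) : v.deg < a := by
  induction v <;> simp_all

lemma val_eq_F_or_deg_lt_of_le_WF {a h} (hv : v ≤ WF a h) : v.1 = .F a ∨ v.deg < a := by
  induction v <;> simp_all [le_iff_eq_or_lt]

lemma val_eq_T_or_deg_lt_of_WT_le {a h} (hv : WT a h ≤ v) : v.1 = .T a ∨ v.deg < a := by
  induction v <;> simp_all [le_iff_eq_or_lt, eq_comm]

@[simp] lemma Wneg_WF {a h} : Wneg (WF a h) = WT (a + 1) (succ_lt_omega1 h) := rfl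
@[simp] lemma Wneg_WZ : Wneg WZ = WZ := rfl
@[simp] lemma Wneg_WT {a h} : Wneg (WT a h) = WF (a + 1) (succ_lt_omega1 h) := rfl

lemma lt_deg_Wneg (h : ↑α ≤ v.deg) : ↑α < (Wneg v).deg := by
  induction v with
  | zero => simp
  | _ => exact WithTop.coe_lt_coe.2 (Order.lt_add_one_iff.2 (WithTop.coe_le_coe.1 h))

def swap : W → W
  | ⟨.F a, h⟩ => ⟨.T a, h⟩
  | ⟨.zero, h⟩ => ⟨.zero, h⟩
  | ⟨.T a, h⟩ => ⟨.F a, h⟩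

@[simp] lemma swap_WF {a h} : swap (WF a h) = WT a h := rfl
@[simp] lemma swap_WZ : swap WZ = WZ := rfl
@[simp] lemma swap_WT {a h} : swap (WT a h) = WF a h := rfl

@[simp] lemma swap_swap (v : W) : swap (swap v) = v := by
  induction v <;> rfl

lemma swap_injective : Function.Injective swap := fun v w h => by
  simpa using congrArg swap h

@[simp] lemma swap_inj : swap v = swap w ↔ v = w := swap_injective.eq_iff

@[simp] lemma swap_le_swap : swap v ≤ swap w ↔ w ≤ v := by
  induction v <;> induction w <;> simp

@[simp] lemma deg_swap (v : W) : (swap v).deg = v.deg := by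
  induction v <;> rfl

@[simp] lemma swap_val_eq_F : (swap v).1 = .F β ↔ v.1 = .T β := by
  induction v <;> simp

@[simp] lemma swap_val_eq_T : (swap v).1 = .T β ↔ v.1 = .F β := by
  induction v <;> simp

end W

lemma degLT_iff {w : W} {α : Ordinal} : degLT w α ↔ w.deg < α := by
  induction w <;> simp [degLT]

/-! ### The relations `⊑_α` and `=_α` on truth values -/

namespace W

/- `AgreeBelow (α + 1)` and `LeAt α` are the pointwise forms of `=_α` and `⊑_α`
(see `eqa_iff` and `sqa_iff`). -/

def AgreeBelow (α : Ordinal) (v w : W) : Prop := v = w ∨ (↑α ≤ v.deg ∧ ↑α ≤ w.deg)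

def LeAt (α : Ordinal) (v w : W) : Prop :=
  AgreeBelow α v w ∧ (w.1 = .F α → v.1 = .F α) ∧ (v.1 = .T α → w.1 = .T α)

variable {α β : Ordinal} {u v w : W}

lemma agreeBelow_iff :
    AgreeBelow α v w ↔ ∀ β < α, (v.1 = .F β ↔ w.1 = .F β) ∧ (v.1 = .T β ↔ w.1 = .T β) := by
  refine ⟨?_, fun h => ?_⟩
  · rintro (rfl | ⟨hv, hw⟩) β hβ
    · simp
    · have hv' := val_ne_of_lt_deg ((WithTop.coe_lt_coe.2 hβ).trans_le hv)
      have hw' := val_ne_of_lt_deg ((WithTop.coe_lt_coe.2 hβ).trans_le hw)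
      simp [hv'.1, hw'.1, hv'.2, hw'.2]
  by_cases hv : ↑α ≤ v.deg
  · by_cases hw : ↑α ≤ w.deg
    · exact .inr ⟨hv, hw⟩
    · induction w with
      | F b => exact .inl (ext_iff.2 ((h b (by simpa using hw)).1.2 rfl))
      | zero => simp at hw
      | T b => exact .inl (ext_iff.2 ((h b (by simpa using hw)).2.2 rfl))
  · induction v with
    | F b => exact .inl (ext_iff.2 ((h b (by simpa using hv)).1.1 rfl).symm)
    | zero => simp at hv
    | T b => exact .inl (ext_iff.2 ((h b (by simpa using hv)).2.1 rfl).symm)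

@[refl] lemma AgreeBelow.refl (α : Ordinal) (v : W) : AgreeBelow α v v := .inl rfl

lemma AgreeBelow.symm (h : AgreeBelow α v w) : AgreeBelow α w v :=
  h.imp Eq.symm And.symm

lemma AgreeBelow.trans (h₁ : AgreeBelow α u v) (h₂ : AgreeBelow α v w) : AgreeBelow α u w := by
  rcases h₁ with rfl | ⟨hu, hv⟩
  · exact h₂
  rcases h₂ with rfl | ⟨-, hw⟩
  exacts [.inr ⟨hu, hv⟩, .inr ⟨hu, hw⟩]

lemma AgreeBelow.mono (hβα : β ≤ α) (h : AgreeBelow α v w) : AgreeBelow β v w :=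
  h.imp_right fun h => ⟨(WithTop.coe_le_coe.2 hβα).trans h.1, (WithTop.coe_le_coe.2 hβα).trans h.2⟩

lemma AgreeBelow.eq_of_deg_lt_left (h : AgreeBelow α v w) (hv : v.deg < α) : v = w :=
  h.resolve_right fun h' => (h'.1.trans_lt hv).false

lemma AgreeBelow.eq_of_deg_lt_right (h : AgreeBelow α v w) (hw : w.deg < α) : v = w :=
  (h.symm.eq_of_deg_lt_left hw).symm

lemma AgreeBelow.le_deg_right (h : AgreeBelow α v w) (hv : ↑α ≤ v.deg) : ↑α ≤ w.deg := by
  rcases h with rfl | h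
  exacts [hv, h.2]

lemma eq_of_forall_agreeBelow (h : ∀ γ < omega1, AgreeBelow (γ + 1) v w) : v = w := by
  have hlt (a : Ordinal) : (a : WithTop Ordinal) < ↑(a + 1) :=
    WithTop.coe_lt_coe.2 (Order.lt_add_one_iff.2 le_rfl)
  induction v with
  | F a ha => exact (h a ha).eq_of_deg_lt_left (hlt a)
  | T a ha => exact (h a ha).eq_of_deg_lt_left (hlt a)
  | zero =>
    induction w with
    | F b hb => exact (h b hb).eq_of_deg_lt_right (hlt b)
    | T b hb => exact (h b hb).eq_of_deg_lt_right (hlt b)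
    | zero => rfl

@[refl] lemma LeAt.refl (α : Ordinal) (v : W) : LeAt α v v := ⟨.refl α v, id, id⟩

lemma LeAt.trans (h₁ : LeAt α u v) (h₂ : LeAt α v w) : LeAt α u w :=
  ⟨h₁.1.trans h₂.1, h₁.2.1 ∘ h₂.2.1, h₂.2.2 ∘ h₁.2.2⟩

lemma LeAt.antisymm (h₁ : LeAt α v w) (h₂ : LeAt α w v) : AgreeBelow (α + 1) v w := by
  refine agreeBelow_iff.2 fun β hβ => ?_
  rcases (Order.lt_add_one_iff.1 hβ).lt_or_eq with hβ | rfl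
  · exact agreeBelow_iff.1 h₁.1 β hβ
  · exact ⟨⟨h₂.2.1, h₁.2.1⟩, ⟨h₁.2.2, h₂.2.2⟩⟩

lemma agreeBelow_add_one_iff : AgreeBelow (α + 1) v w ↔ LeAt α v w ∧ LeAt α w v := by
  refine ⟨fun h => ?_, fun h => h.1.antisymm h.2⟩
  have hα := agreeBelow_iff.1 h α (Order.lt_add_one_iff.2 le_rfl)
  have hbelow := h.mono (Order.lt_add_one_iff.2 le_rfl).le
  exact ⟨⟨hbelow, hα.1.2, hα.2.1⟩, ⟨hbelow.symm, hα.1.1, hα.2.2⟩⟩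

lemma leAt_swap : LeAt α (swap w) (swap v) ↔ LeAt α v w := by
  simp only [LeAt, AgreeBelow, swap_inj, deg_swap, swap_val_eq_F, swap_val_eq_T]
  constructor <;> rintro ⟨h₁, h₂, h₃⟩ <;> exact ⟨h₁.imp Eq.symm And.symm, h₃, h₂⟩

lemma LeAt.Wneg (h : LeAt α v w) : LeAt α (Wneg v) (Wneg w) := by
  rcases h.1 with rfl | ⟨hv, hw⟩
  · rfl
  have hv' := lt_deg_Wneg hv
  have hw' := lt_deg_Wneg hw
  exact ⟨.inr ⟨hv'.le, hw'.le⟩, fun h => absurd h (val_ne_of_lt_deg hw').1,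
    fun h => absurd h (val_ne_of_lt_deg hv').2⟩

def levelRank (α : Ordinal) (v : W) : ℕ :=
  if v.1 = .F α then 0 else if v.1 = .T α then 2 else 1

lemma LeAt.levelRank_le (h : LeAt α v w) : levelRank α v ≤ levelRank α w := by
  have := h.2
  unfold levelRank
  split_ifs <;> simp_all

lemma LeAt.levelRank_lt (h : LeAt α v w) (hne : ¬ AgreeBelow (α + 1) v w) :
    levelRank α v < levelRank α w := by
  refine h.levelRank_le.lt_of_ne fun heq => hne (agreeBelow_add_one_iff.2 ⟨h, h.1.symm, ?_⟩)
  have := h.2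
  unfold levelRank at heq
  split_ifs at heq <;> simp_all

variable {S T : Set W} {s t : W}

lemma WT_mem_of_isLUB {a h} (hS : IsLUB S (WT a h)) : WT a h ∈ S := by
  by_contra hmem
  -- `T_{a+1}` is the immediate predecessor of `T_a`
  have hub : WT (a + 1) (succ_lt_omega1 h) ∈ upperBounds S := fun x hx => by
    have hlt := lt_of_le_of_ne (hS.1 hx) (ne_of_mem_of_not_mem hx hmem)
    induction x <;> simp_all [Order.add_one_le_iff]
  simpa [Order.lt_add_one_iff] using hS.2 hub

lemma isLUB_swap_image_iff : IsLUB (swap '' S) (swap s) ↔ IsGLB S s := by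
  refine ⟨fun h => ⟨fun x hx => ?_, fun b hb => ?_⟩, fun h => ⟨?_, fun b hb => ?_⟩⟩
  · exact swap_le_swap.1 (h.1 ⟨x, hx, rfl⟩)
  · exact swap_le_swap.1 (h.2 (Set.forall_mem_image.2 fun x hx => swap_le_swap.2 (hb hx)))
  · exact Set.forall_mem_image.2 fun x hx => swap_le_swap.2 (h.1 hx)
  · have := swap_le_swap.2 (h.2 fun x hx => by simpa using swap_le_swap.2 (hb ⟨x, hx, rfl⟩))
    rwa [swap_swap] at this

lemma AgreeBelow.eq_of_isLUB_of_deg_lt (hST : ∀ x ∈ S, ∃ y ∈ T, AgreeBelow α x y)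
    (hTS : ∀ y ∈ T, ∃ x ∈ S, AgreeBelow α x y) (hs : IsLUB S s) (ht : IsLUB T t)
    (hdeg : s.deg < α) : s = t := by
  induction s with
  | F a =>
    -- everything in `S` lies below `F_a`, so it has degree `< α` and is its own partner
    have hlow : ∀ x ∈ S, x.deg < α := fun x hx => (deg_le_of_le_WF (hs.1 hx)).trans_lt hdeg
    have hST : S = T := by
      refine Set.ext fun x => ⟨fun hx => ?_, fun hx => ?_⟩
      · obtain ⟨y, hy, hxy⟩ := hST x hx
        rwa [hxy.eq_of_deg_lt_left (hlow x hx)]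
      · obtain ⟨y, hy, hyx⟩ := hTS x hx
        rwa [← hyx.eq_of_deg_lt_left (hlow y hy)]
    exact hs.unique (hST ▸ ht)
  | zero => simp at hdeg
  | T a h =>
    obtain ⟨y, hy, hxy⟩ := hST _ (WT_mem_of_isLUB hs)
    have hyT : WT a h ∈ T := hxy.eq_of_deg_lt_left hdeg ▸ hy
    refine (ht.unique ⟨fun y hy => not_lt.1 fun hlt => ?_, fun b hb => hb hyT⟩).symm
    obtain ⟨x, hx, hxy⟩ := hTS y hy
    have hdeg' : y.deg < α := (deg_lt_of_WT_lt hlt).trans hdeg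
    exact (hs.1 hx).not_gt (hxy.eq_of_deg_lt_right hdeg' ▸ hlt)

theorem LeAt.of_isLUB (hST : ∀ x ∈ S, ∃ y ∈ T, LeAt α x y) (hTS : ∀ y ∈ T, ∃ x ∈ S, LeAt α x y)
    (hs : IsLUB S s) (ht : IsLUB T t) : LeAt α s t := by
  have hST' : ∀ x ∈ S, ∃ y ∈ T, AgreeBelow α x y := fun x hx =>
    (hST x hx).imp fun _ => And.imp_right And.left
  have hTS' : ∀ y ∈ T, ∃ x ∈ S, AgreeBelow α x y := fun y hy =>
    (hTS y hy).imp fun _ => And.imp_right And.left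
  have hagree : AgreeBelow α s t := by
    by_cases hs' : ↑α ≤ s.deg
    · by_cases ht' : ↑α ≤ t.deg
      · exact .inr ⟨hs', ht'⟩
      · refine .inl (AgreeBelow.eq_of_isLUB_of_deg_lt (fun y hy => ?_) (fun x hx => ?_) ht hs
          (not_le.1 ht')).symm
        · obtain ⟨x, hx, h⟩ := hTS' y hy; exact ⟨x, hx, h.symm⟩
        · obtain ⟨y, hy, h⟩ := hST' x hx; exact ⟨y, hy, h.symm⟩
    · exact .inl (AgreeBelow.eq_of_isLUB_of_deg_lt hST' hTS' hs ht (not_le.1 hs'))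
  refine ⟨hagree, fun htF => ?_, fun hsT => ?_⟩
  · induction t with
    | F a h =>
      obtain rfl : a = α := by simpa using htF
      have hsle : s ≤ WF a h := hs.2 fun x hx => by
        obtain ⟨y, hy, hxy⟩ := hST x hx
        rcases val_eq_F_or_deg_lt_of_le_WF (ht.1 hy) with hyF | hylt
        · exact (eq_WF_of_val (hxy.2.1 hyF)).le
        · exact hxy.1.eq_of_deg_lt_right hylt ▸ ht.1 hy
      rcases val_eq_F_or_deg_lt_of_le_WF hsle with hsF | hslt
      · exact hsF
      · rw [hagree.eq_of_deg_lt_left hslt]; rfl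
    | zero => simp at htF
    | T => simp at htF
  · induction s with
    | T a h =>
      obtain rfl : a = α := by simpa using hsT
      obtain ⟨y, hy, hxy⟩ := hST _ (WT_mem_of_isLUB hs)
      rw [eq_WT_of_val (hxy.2.2 rfl)] at hy
      rcases val_eq_T_or_deg_lt_of_WT_le (ht.1 hy) with htT | htlt
      · exact htT
      · rw [← hagree.eq_of_deg_lt_right htlt]; rfl
    | zero => simp at hsT
    | F => simp at hsT

theorem LeAt.of_isGLB (hST : ∀ x ∈ S, ∃ y ∈ T, LeAt α x y) (hTS : ∀ y ∈ T, ∃ x ∈ S, LeAt α x y)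
    (hs : IsGLB S s) (ht : IsGLB T t) : LeAt α s t := by
  rw [← leAt_swap]
  refine LeAt.of_isLUB ?_ ?_ (isLUB_swap_image_iff.2 ht) (isLUB_swap_image_iff.2 hs)
  · rintro _ ⟨y, hy, rfl⟩
    obtain ⟨x, hx, h⟩ := hTS y hy
    exact ⟨_, ⟨x, hx, rfl⟩, leAt_swap.2 h⟩
  · rintro _ ⟨x, hx, rfl⟩
    obtain ⟨y, hy, h⟩ := hST x hx
    exact ⟨_, ⟨y, hy, rfl⟩, leAt_swap.2 h⟩

lemma LeAt.min {v₁ v₂ w₁ w₂ : W} (h₁ : LeAt α v₁ w₁) (h₂ : LeAt α v₂ w₂) :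
    LeAt α (min v₁ v₂) (min w₁ w₂) := by
  refine LeAt.of_isGLB ?_ ?_ isGLB_pair isGLB_pair
  · rintro x (rfl | rfl)
    exacts [⟨_, .inl rfl, h₁⟩, ⟨_, .inr rfl, h₂⟩]
  · rintro y (rfl | rfl)
    exacts [⟨_, .inl rfl, h₁⟩, ⟨_, .inr rfl, h₂⟩]

lemma LeAt.max {v₁ v₂ w₁ w₂ : W} (h₁ : LeAt α v₁ w₁) (h₂ : LeAt α v₂ w₂) :
    LeAt α (max v₁ v₂) (max w₁ w₂) := by
  refine LeAt.of_isLUB ?_ ?_ isLUB_pair isLUB_pair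
  · rintro x (rfl | rfl)
    exacts [⟨_, .inl rfl, h₁⟩, ⟨_, .inr rfl, h₂⟩]
  · rintro y (rfl | rfl)
    exacts [⟨_, .inl rfl, h₁⟩, ⟨_, .inr rfl, h₂⟩]

end W

open W

theorem isLUB_Wsup (S : Set W) : IsLUB S (Wsup S) := by
  have hbdd : BddAbove (FIdx S) := ⟨omega1, fun _ ha => (mem_lt_omega1_of_FIdx ha).le⟩
  have hsup_le : ∀ c h, WF c h ∈ upperBounds S → sSup (FIdx S) ≤ c := fun c h hb =>
    csSup_le' fun a ⟨x, hx, hxa⟩ => WF_le_WF.1 (eq_WF_of_val hxa ▸ hb hx)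
  unfold Wsup
  split_ifs with hT hZ hF
  · obtain ⟨w, hwS, hw⟩ := csInf_mem hT
    refine ⟨fun x hx => ?_, fun b hb => eq_WT_of_val hw ▸ hb hwS⟩
    induction x with
    | T a h => simpa using csInf_le' (show a ∈ TIdx S from ⟨_, hx, rfl⟩)
    | _ => simp
  all_goals
    have hnotT : ∀ a h, WT a h ∉ S := fun a h hx => hT ⟨a, _, hx, rfl⟩
  · refine ⟨fun x hx => ?_, fun b hb => hb hZ⟩
    induction x with
    | T a h => exact (hnotT a h hx).elim
    | _ => simp
  · refine ⟨fun x hx => ?_, fun b hb => ?_⟩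
    · induction x with
      | F a h => simpa using le_csSup hbdd (show a ∈ FIdx S from ⟨_, hx, rfl⟩)
      | zero => exact (hZ hx).elim
      | T a h => exact (hnotT a h hx).elim
    · induction b with
      | F c h => exact WF_le_WF.2 (hsup_le c h hb)
      | _ => simp
  · refine ⟨fun x hx => ?_, fun b hb => ?_⟩
    · induction x with
      | F a h => simp
      | zero => exact (hZ hx).elim
      | T a h => exact (hnotT a h hx).elim
    · induction b with
      | F c h => exact (hF ((hsup_le c h hb).trans_lt h)).elim
      | _ => simp

lemma Winf_eq_swap_Wsup (S : Set W) : Winf S = swap (Wsup (swap '' S)) := by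
  have hT : TIdx (swap '' S) = FIdx S := by ext; simp [TIdx, FIdx]
  have hF : FIdx (swap '' S) = TIdx S := by ext; simp [TIdx, FIdx]
  have hZ : WZ ∈ swap '' S ↔ WZ ∈ S := by
    conv_lhs => rw [← swap_WZ]
    exact swap_injective.mem_set_image
  unfold Winf Wsup
  simp only [hT, hF, hZ]
  split_ifs <;> rfl

theorem isGLB_Winf (S : Set W) : IsGLB S (Winf S) := by
  rw [Winf_eq_swap_Wsup]
  exact isLUB_swap_image_iff.1 (by simpa using isLUB_Wsup _)

/-! ### Monotonicity of the semantics -/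

theorem Formula.eval_leAt {α : Ordinal} {I J : Interp L} (h : ∀ A, LeAt α (I A) (J A))
    (φ : Formula L) (g : ℕ → HU L) : LeAt α (φ.eval I g) (φ.eval J g) := by
  induction φ generalizing g with
  | verum | falsum => rfl
  | atom p ts => exact h _
  | neg φ ih => exact (ih g).Wneg
  | conj φ ψ ihφ ihψ => exact (ihφ g).min (ihψ g)
  | disj φ ψ ihφ ihψ => exact (ihφ g).max (ihψ g)
  | all v φ ih =>
    refine LeAt.of_isGLB ?_ ?_ (isGLB_Winf _) (isGLB_Winf _) <;>
      exact Set.forall_mem_range.2 fun u => ⟨_, ⟨u, rfl⟩, ih _⟩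
  | ex v φ ih =>
    refine LeAt.of_isLUB ?_ ?_ (isLUB_Wsup _) (isLUB_Wsup _) <;>
      exact Set.forall_mem_range.2 fun u => ⟨_, ⟨u, rfl⟩, ih _⟩

section Interp

variable {α β : Ordinal} {I J K : Interp L}

lemma forall_agreeBelow_iff : (∀ A, AgreeBelow α (I A) (J A)) ↔
    ∀ β < α, Ifalse I β = Ifalse J β ∧ Itrue I β = Itrue J β := by
  simp only [agreeBelow_iff, Set.ext_iff, Ifalse, Itrue, Set.mem_ofPred_eq]
  exact ⟨fun h β hβ => ⟨fun A => (h A β hβ).1, fun A => (h A β hβ).2⟩,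
    fun h A β hβ => ⟨(h β hβ).1 A, (h β hβ).2 A⟩⟩

lemma eqa_iff : eqa α I J ↔ ∀ A, AgreeBelow (α + 1) (I A) (J A) := by
  simp only [forall_agreeBelow_iff, Order.lt_add_one_iff]
  rfl

lemma forall_lt_eqa_iff : (∀ β < α, eqa β I J) ↔ ∀ A, AgreeBelow α (I A) (J A) := by
  rw [forall_agreeBelow_iff]
  exact ⟨fun h β hβ => h β hβ β le_rfl, fun h β hβ γ hγ => h γ (hγ.trans_lt hβ)⟩

lemma sqa_iff : sqa α I J ↔ ∀ A, LeAt α (I A) (J A) := by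
  simp only [sqa, forall_lt_eqa_iff, LeAt, forall_and, Set.subset_def, Ifalse, Itrue,
    Set.mem_ofPred_eq]

lemma eqa_iff_sqa_and_sqa : eqa α I J ↔ sqa α I J ∧ sqa α J I := by
  simp only [eqa_iff, sqa_iff, agreeBelow_add_one_iff, forall_and]

lemma eqa.symm (h : eqa α I J) : eqa α J I := fun β hβ => ⟨(h β hβ).1.symm, (h β hβ).2.symm⟩

lemma eqa.trans (h₁ : eqa α I J) (h₂ : eqa α J K) : eqa α I K :=
  fun β hβ => ⟨(h₁ β hβ).1.trans (h₂ β hβ).1, (h₁ β hβ).2.trans (h₂ β hβ).2⟩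

lemma eqa.mono (hβα : β ≤ α) (h : eqa α I J) : eqa β I J := fun γ hγ => h γ (hγ.trans hβα)

lemma sqa_refl (α : Ordinal) (I : Interp L) : sqa α I I := sqa_iff.2 fun A => .refl α (I A)

lemma sqa.trans (h₁ : sqa α I J) (h₂ : sqa α J K) : sqa α I K :=
  sqa_iff.2 fun A => (sqa_iff.1 h₁ A).trans (sqa_iff.1 h₂ A)

lemma eq_of_forall_eqa (h : ∀ γ < omega1, eqa γ I J) : I = J :=
  funext fun A => eq_of_forall_agreeBelow fun γ hγ => eqa_iff.1 (h γ hγ) A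

theorem sqa_TP (P : Program L) (h : sqa α I J) : sqa α (TP P I) (TP P J) := by
  rw [sqa_iff] at h ⊢
  intro A
  refine LeAt.of_isLUB ?_ ?_ (isLUB_Wsup _) (isLUB_Wsup _) <;>
    exact fun _ ⟨φ, hφ, hv⟩ => ⟨_, ⟨φ, hφ, rfl⟩, hv ▸ φ.eval_leAt h _⟩

theorem eqa_TP (P : Program L) (h : eqa α I J) : eqa α (TP P I) (TP P J) := by
  rw [eqa_iff_sqa_and_sqa] at h ⊢
  exact ⟨sqa_TP P h.1, sqa_TP P h.2⟩

end Interp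

/-! ### Transfinite iteration -/

def Term.code : Term L → ℕ
  | .var n => Nat.pair 0 n
  | .const c => Nat.pair 1 c.val
  | .func f ts => Nat.pair 2 (Nat.pair f.val (Encodable.encode (List.ofFn fun i => (ts i).code)))

lemma Term.code_injective : Function.Injective (Term.code (L := L)) := by
  intro t₁ t₂ h
  induction t₁ generalizing t₂ with
  | var n => cases t₂ <;> simp_all [Term.code, Nat.pair_eq_pair]
  | const c => cases t₂ <;> simp_all [Term.code, Nat.pair_eq_pair, Fin.ext_iff]
  | func f ts ih =>
    cases t₂ with
    | func f' ts' =>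
      simp only [Term.code, Nat.pair_eq_pair] at h
      obtain ⟨hf, hl⟩ := h.2
      obtain rfl : f = f' := Fin.ext hf
      have hl' := List.ofFn_inj.1 (Encodable.encode_injective hl)
      exact congrArg _ (funext fun i => ih i (congrFun hl' i))
    | _ => simp [Term.code, Nat.pair_eq_pair] at h

instance : Countable (Term L) := Term.code_injective.countable

instance : Countable (HU L) := Subtype.countable

instance : Countable (GroundAtom L) :=
  Function.Injective.countable (f := fun A : GroundAtom L => (⟨A.pred, A.args⟩ :
    (p : Fin L.nPred) × (Fin (L.predAr p) → HU L))) fun A B h => by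
    cases A; cases B; cases h; rfl

lemma exists_lt_omega1_of_countable {s : Set Ordinal} (hs : s.Countable)
    (h : s ⊆ Set.Iio omega1) : ∃ b < omega1, ∀ γ ∈ s, γ < b := by
  have := hs.to_subtype
  refine ⟨(⨆ γ : s, γ.1) + 1, succ_lt_omega1 (Ordinal.iSup_lt_omega_one fun γ => h γ.2),
    fun γ hγ => Order.lt_add_one_iff.2 (Ordinal.le_iSup (fun γ : s => γ.1) ⟨γ, hγ⟩)⟩

lemma not_countable_Iio_omega1 : ¬ (Set.Iio omega1).Countable := fun hs => by
  obtain ⟨b, hb, hlt⟩ := exists_lt_omega1_of_countable hs subset_rfl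
  exact (hlt b hb).false

section Iteration

variable {P : Program L} {α : Ordinal} {hα : α < omega1} {I J : Interp L}

@[simp] lemma iter_zero : iter P α hα I 0 = I := Ordinal.limitRecOn_zero _ _ _

lemma iter_add_one (β : Ordinal) : iter P α hα I (β + 1) = TP P (iter P α hα I β) :=
  Ordinal.limitRecOn_add_one _ _ _ _

lemma iter_limit {β : Ordinal} (hβ : Order.IsSuccLimit β) (A : GroundAtom L) :
    iter P α hα I β A =
      if degLT (I A) α then I A
      else if ∃ γ, ∃ _ : γ < β, (iter P α hα I γ A).1 = .T α then WT α hα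
      else if ∀ γ, ∀ _ : γ < β, (iter P α hα I γ A).1 = .F α then WF α hα
      else WF (α + 1) (succ_lt_omega1 hα) :=
  congrFun (Ordinal.limitRecOn_limit (motive := fun _ => Interp L) _ _ _ _ hβ) A

lemma sqa_iter_limit {β : Ordinal} (hβ : Order.IsSuccLimit β)
    (hI : ∀ γ < β, sqa α I (iter P α hα I γ)) {γ : Ordinal} (hγ : γ < β) :
    sqa α (iter P α hα I γ) (iter P α hα I β) := by
  refine sqa_iff.2 fun A => ?_
  have hIγ := sqa_iff.1 (hI γ hγ) A
  rw [iter_limit hβ]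
  split_ifs with hdeg hT hF
  · rw [← hIγ.1.eq_of_deg_lt_left (degLT_iff.1 hdeg)]
  · rw [degLT_iff, not_lt] at hdeg
    exact ⟨.inr ⟨hIγ.1.le_deg_right hdeg, by simp⟩, by simp, fun _ => rfl⟩
  · rw [eq_WF_of_val (hF γ hγ)]
  · rw [degLT_iff, not_lt] at hdeg
    exact ⟨.inr ⟨hIγ.1.le_deg_right hdeg, by simp⟩, by simp, fun h => (hT ⟨γ, hγ, h⟩).elim⟩

lemma iter_limit_sqa {β : Ordinal} (hβ : Order.IsSuccLimit β)
    (hJ : ∀ γ < β, sqa α (iter P α hα I γ) J) : sqa α (iter P α hα I β) J := by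
  refine sqa_iff.2 fun A => ?_
  have hJ' := fun γ hγ => sqa_iff.1 (hJ γ hγ) A
  have hI : LeAt α (I A) (J A) := by simpa using hJ' 0 hβ.bot_lt
  rw [iter_limit hβ]
  split_ifs with hdeg hT hF
  · exact hI
  · obtain ⟨γ, hγ, hγT⟩ := hT
    rw [eq_WT_of_val ((hJ' γ hγ).2.2 hγT)]
  · simpa [eq_WF_of_val (by simpa using hF 0 hβ.bot_lt : (I A).1 = .F α)] using hI
  · rw [degLT_iff, not_lt] at hdeg
    exact ⟨.inr ⟨by simp, hI.1.le_deg_right hdeg⟩,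
      fun hJF => (hF fun γ hγ => (hJ' γ hγ).2.1 hJF).elim, by simp⟩

theorem iter_sqa (hI : sqa α I (TP P I)) (β : Ordinal) :
    (∀ γ ≤ β, sqa α (iter P α hα I γ) (iter P α hα I β)) ∧
      sqa α (iter P α hα I β) (TP P (iter P α hα I β)) := by
  induction β using Ordinal.limitRecOn with
  | zero => exact ⟨fun γ hγ => nonpos_iff_eq_zero.1 hγ ▸ sqa_refl _ _, by rwa [iter_zero]⟩
  | add_one β ih =>
    refine ⟨fun γ hγ => ?_, by rw [iter_add_one]; exact sqa_TP P ih.2⟩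
    rcases hγ.lt_or_eq with hγ | rfl
    · rw [iter_add_one]
      exact (ih.1 γ (Order.lt_add_one_iff.1 hγ)).trans ih.2
    · exact sqa_refl _ _
  | limit β hβ ih =>
    have hchain : ∀ γ < β, sqa α (iter P α hα I γ) (iter P α hα I β) :=
      fun γ => sqa_iter_limit hβ fun δ hδ => by simpa using (ih δ hδ).1 0 zero_le
    refine ⟨fun γ hγ => ?_,
      iter_limit_sqa hβ fun γ hγ => (ih γ hγ).2.trans (sqa_TP P (hchain γ hγ))⟩
    rcases hγ.lt_or_eq with hγ | rfl
    exacts [hchain γ hγ, sqa_refl _ _]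

lemma sqa_iter_of_le (hI : sqa α I (TP P I)) {γ β : Ordinal} (h : γ ≤ β) :
    sqa α (iter P α hα I γ) (iter P α hα I β) :=
  (iter_sqa hI β).1 γ h

lemma exists_eqa_iter_add_one (hI : sqa α I (TP P I)) :
    ∃ γ < omega1, eqa α (iter P α hα I γ) (iter P α hα I (γ + 1)) := by
  by_contra! hne
  -- otherwise every step below `ω₁` strictly raises the level-`α` rank of some atom, and
  -- these steps would inject into the countable type `GroundAtom L × ℕ`
  have hA : ∀ γ : Set.Iio omega1, ∃ A,
      ¬ AgreeBelow (α + 1) (iter P α hα I γ A) (iter P α hα I (γ + 1) A) := fun γ => by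
    simpa [eqa_iff] using hne γ γ.2
  choose A hA using hA
  have hrank : ∀ γ δ : Set.Iio omega1, γ.1 < δ.1 → A γ = A δ →
      levelRank α (iter P α hα I γ (A γ)) < levelRank α (iter P α hα I δ (A δ)) := by
    intro γ δ hγδ hAγδ
    rw [← hAγδ]
    exact ((sqa_iff.1 (sqa_iter_of_le hI le_self_add) _).levelRank_lt (hA γ)).trans_le
      (sqa_iff.1 (sqa_iter_of_le hI (Order.add_one_le_of_lt hγδ)) _).levelRank_le
  have hinj : Function.Injective fun γ : Set.Iio omega1 =>
      (A γ, levelRank α (iter P α hα I γ (A γ))) := fun γ δ h => by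
    obtain ⟨hAγδ, hr⟩ := Prod.mk.inj h
    rcases lt_trichotomy γ.1 δ.1 with hlt | heq | hgt
    · exact absurd hr (hrank γ δ hlt hAγδ).ne
    · exact Subtype.ext heq
    · exact absurd hr (hrank δ γ hgt hAγδ.symm).ne'
  exact not_countable_Iio_omega1 (Set.countable_coe_iff.1 hinj.countable)

lemma sqa_iter_of_stationary (hI : sqa α I (TP P I)) {γ : Ordinal}
    (hγ : eqa α (iter P α hα I γ) (iter P α hα I (γ + 1))) {β : Ordinal} (hβ : γ ≤ β) :
    sqa α (iter P α hα I β) (iter P α hα I γ) := by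
  induction β using Ordinal.limitRecOn with
  | zero => rw [nonpos_iff_eq_zero.1 hβ]; exact sqa_refl _ _
  | add_one β ih =>
    rcases hβ.lt_or_eq with hβ | rfl
    · rw [iter_add_one]
      exact (sqa_TP P (ih (Order.lt_add_one_iff.1 hβ))).trans
        (iter_add_one (hα := hα) γ ▸ (eqa_iff_sqa_and_sqa.1 hγ).2)
    · exact sqa_refl _ _
  | limit β hβ' ih =>
    rcases hβ.lt_or_eq with hβ | rfl
    · exact iter_limit_sqa hβ' fun δ hδ => (le_total δ γ).elim (sqa_iter_of_le hI) (ih δ hδ)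
    · exact sqa_refl _ _

theorem eqa_TP_iter_omega1 (hI : sqa α I (TP P I)) :
    eqa α (iter P α hα I omega1) (TP P (iter P α hα I omega1)) := by
  obtain ⟨γ, hγ, hstab⟩ := exists_eqa_iter_add_one hI
  have h : ∀ β, γ ≤ β → eqa α (iter P α hα I γ) (iter P α hα I β) := fun β hβ =>
    eqa_iff_sqa_and_sqa.2 ⟨sqa_iter_of_le hI hβ, sqa_iter_of_stationary hI hstab hβ⟩
  rw [← iter_add_one]
  exact (h _ hγ.le).symm.trans (h _ (hγ.le.trans le_self_add))

end Iteration

/-! ### Unions of coherent families -/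

section Union

variable {α : Ordinal} {hα : α < omega1} {M : Ordinal → Interp L}

lemma agreeBelow_of_coherent (hM : ∀ ζ γ, ζ < γ → γ < α → eqa ζ (M ζ) (M γ)) {ζ γ : Ordinal}
    (hζγ : ζ ≤ γ) (hγ : γ < α) (A : GroundAtom L) : AgreeBelow (ζ + 1) (M ζ A) (M γ A) := by
  rcases hζγ.lt_or_eq with h | rfl
  exacts [eqa_iff.1 (hM ζ γ h hγ) A, .refl _ _]

lemma unionInterp_apply (A : GroundAtom L) :
    (∃ ζ < α, (M ζ A).deg = ζ ∧ unionInterp α hα (fun γ _ => M γ) A = M ζ A) ∨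
      ((∀ ζ < α, (M ζ A).deg ≠ ζ) ∧ unionInterp α hα (fun γ _ => M γ) A = WF α hα) := by
  unfold unionInterp
  split_ifs with h
  · exact .inl ⟨h.choose, h.choose_spec.choose, deg_eq_iff.2 h.choose_spec.choose_spec, rfl⟩
  · exact .inr ⟨fun ζ hζ hdeg => h ⟨ζ, hζ, deg_eq_iff.1 hdeg⟩, rfl⟩

lemma eqa_unionInterp (hM : ∀ ζ γ, ζ < γ → γ < α → eqa ζ (M ζ) (M γ)) {γ : Ordinal}
    (hγ : γ < α) : eqa γ (M γ) (unionInterp α hα fun γ _ => M γ) := by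
  refine eqa_iff.2 fun A => ?_
  rcases unionInterp_apply A with ⟨ζ, hζ, hdeg, hU⟩ | ⟨hdeg, hU⟩ <;> rw [hU]
  · rcases le_or_gt ζ γ with h | h
    · rw [(agreeBelow_of_coherent hM h hγ A).eq_of_deg_lt_left
        (hdeg ▸ WithTop.coe_lt_coe.2 (Order.lt_add_one_iff.2 le_rfl))]
    · exact eqa_iff.1 (hM γ ζ h hζ) A
  · refine .inr ⟨not_lt.1 fun hlt => ?_, WithTop.coe_le_coe.2 (Order.add_one_le_of_lt hγ)⟩
    obtain ⟨β, hβγ, hβ⟩ := exists_deg_eq_of_deg_lt hlt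
    have hβγ := Order.lt_add_one_iff.1 hβγ
    have := (agreeBelow_of_coherent hM hβγ hγ A).eq_of_deg_lt_right
      (hβ ▸ WithTop.coe_lt_coe.2 (Order.lt_add_one_iff.2 le_rfl))
    exact hdeg β (hβγ.trans_lt hγ) (this ▸ hβ)

lemma sqa_TP_unionInterp {P : Program L} (hM : ∀ ζ γ, ζ < γ → γ < α → eqa ζ (M ζ) (M γ))
    (hfix : ∀ γ < α, eqa γ (M γ) (TP P (M γ))) :
    sqa α (unionInterp α hα fun γ _ => M γ) (TP P (unionInterp α hα fun γ _ => M γ)) := by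
  have hbelow : ∀ β < α, eqa β (unionInterp α hα fun γ _ => M γ)
      (TP P (unionInterp α hα fun γ _ => M γ)) := fun β hβ =>
    (eqa_unionInterp hM hβ).symm.trans ((hfix β hβ).trans (eqa_TP P (eqa_unionInterp hM hβ)))
  refine sqa_iff.2 fun A => ?_
  have hA := forall_lt_eqa_iff.1 hbelow A
  rcases unionInterp_apply (hα := hα) A with ⟨ζ, hζ, hdeg, hU⟩ | ⟨-, hU⟩
  · rw [← hA.eq_of_deg_lt_left (by rw [hU, hdeg]; exact WithTop.coe_lt_coe.2 hζ)]
  · exact ⟨hA, fun _ => by rw [hU]; rfl, fun h => by simp [hU] at h⟩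

end Union

/-! ### Approximants, depth and `M_P` -/

section Approx

variable {P : Program L}

lemma approx_eq_iter {α : Ordinal} (hα : α < omega1)
    (hcoh : ∀ γ < α, ∀ ζ < γ, eqa ζ (approx P ζ) (approx P γ))
    (hU : sqa α (unionInterp α hα fun γ _ => approx P γ)
      (TP P (unionInterp α hα fun γ _ => approx P γ))) :
    approx P α = iter P α hα (unionInterp α hα fun γ _ => approx P γ) omega1 := by
  rw [approx]
  exact (dif_pos hα).trans (if_pos ⟨hcoh, hU⟩)

theorem approx_spec {α : Ordinal} (hα : α < omega1) :
    (∀ ζ < α, eqa ζ (approx P ζ) (approx P α)) ∧ eqa α (approx P α) (TP P (approx P α)) := by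
  induction α using WellFoundedLT.induction with
  | _ α ih =>
  have hcoh : ∀ ζ γ, ζ < γ → γ < α → eqa ζ (approx P ζ) (approx P γ) :=
    fun ζ γ hζγ hγ => (ih γ hγ (hγ.trans hα)).1 ζ hζγ
  have hU := sqa_TP_unionInterp (hα := hα) hcoh fun γ hγ => (ih γ hγ (hγ.trans hα)).2
  rw [approx_eq_iter hα (fun γ hγ ζ hζ => hcoh ζ γ hζ hγ) hU]
  refine ⟨fun ζ hζ => (eqa_unionInterp (hα := hα) hcoh hζ).trans ?_, eqa_TP_iter_omega1 hU⟩
  simpa using (sqa_iter_of_le (hα := hα) hU (zero_le (a := omega1))).1 ζ hζ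

lemma agreeBelow_approx {ζ γ : Ordinal} (h : ζ ≤ γ) (hγ : γ < omega1) (A : GroundAtom L) :
    AgreeBelow (ζ + 1) (approx P ζ A) (approx P γ A) :=
  agreeBelow_of_coherent (fun _ _ hζγ hγ => (approx_spec hγ).1 _ hζγ) h hγ A

lemma depth_spec : depth P < omega1 ∧ ∀ γ, depth P ≤ γ → γ < omega1 →
    Ifalse (approx P γ) γ = ∅ ∧ Itrue (approx P γ) γ = ∅ := by
  refine csInf_mem (s := {δ | δ < omega1 ∧ ∀ γ, δ ≤ γ → γ < omega1 →
    Ifalse (approx P γ) γ = ∅ ∧ Itrue (approx P γ) γ = ∅}) ?_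
  let levels : Set Ordinal := {γ | γ < omega1 ∧ ∃ A, (approx P γ A).deg = γ}
  choose A hA using fun γ : levels => γ.2.2
  have hinj : Function.Injective A := fun γ δ h => by
    wlog hγδ : γ.1 ≤ δ.1 generalizing γ δ
    · exact (this δ γ h.symm (le_of_not_ge hγδ)).symm
    have := (agreeBelow_approx hγδ δ.2.1 (A γ)).eq_of_deg_lt_left
      ((hA γ).symm ▸ WithTop.coe_lt_coe.2 (Order.lt_add_one_iff.2 le_rfl))
    exact Subtype.ext (WithTop.coe_injective (((hA γ).symm.trans (congrArg deg this)).trans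
      (h ▸ hA δ)))
  obtain ⟨b, hb, hlt⟩ :=
    exists_lt_omega1_of_countable (Set.countable_coe_iff.1 hinj.countable) fun γ hγ => hγ.1
  refine ⟨b, hb, fun γ hbγ hγ => ?_⟩
  have hdeg : ∀ A, (approx P γ A).deg ≠ γ := fun A hA => (hlt γ ⟨hγ, A, hA⟩).not_ge hbγ
  simp only [Set.eq_empty_iff_forall_notMem, Ifalse, Itrue, Set.mem_ofPred_eq]
  exact ⟨fun A h => hdeg A (deg_eq_iff.2 (.inl h)), fun A h => hdeg A (deg_eq_iff.2 (.inr h))⟩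

lemma deg_approx_ne_of_depth_le {γ : Ordinal} (hδγ : depth P ≤ γ) (hγ : γ < omega1)
    (A : GroundAtom L) : (approx P γ A).deg ≠ γ := fun h => by
  rcases deg_eq_iff.1 h with h | h
  · exact ((depth_spec.2 γ hδγ hγ).1.symm ▸ h : A ∈ (∅ : Set _))
  · exact ((depth_spec.2 γ hδγ hγ).2.symm ▸ h : A ∈ (∅ : Set _))

lemma eqa_MP_approx {γ : Ordinal} (hδγ : depth P ≤ γ) (hγ : γ < omega1) :
    eqa γ (MP P) (approx P γ) := by
  refine eqa_iff.2 fun A => ?_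
  have hgap : (approx P γ A).deg < depth P ∨ ↑γ < (approx P γ A).deg := by
    by_contra! h
    obtain ⟨β, hβγ, hβ⟩ := exists_deg_eq_of_deg_lt (h.2.trans_lt
      (WithTop.coe_lt_coe.2 (Order.lt_add_one_iff.2 le_rfl)))
    have hβγ := Order.lt_add_one_iff.1 hβγ
    have := (agreeBelow_approx hβγ hγ A).eq_of_deg_lt_right
      (hβ ▸ WithTop.coe_lt_coe.2 (Order.lt_add_one_iff.2 le_rfl))
    exact deg_approx_ne_of_depth_le (WithTop.coe_le_coe.1 (hβ ▸ h.1)) (hβγ.trans_lt hγ) A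
      (this ▸ hβ)
  have hδ : AgreeBelow (depth P) (approx P (depth P) A) (approx P γ A) :=
    (agreeBelow_approx hδγ hγ A).mono le_self_add
  unfold MP
  rcases hgap with hlow | hhigh
  · rw [if_pos (degLT_iff.2 (hδ.eq_of_deg_lt_right hlow ▸ hlow)), hδ.eq_of_deg_lt_right hlow]
  · rw [if_neg fun hlow => (degLT_iff.1 hlow).not_ge ?_]
    · exact .inr ⟨le_top, add_one_le_deg hhigh⟩
    · rw [hδ.eq_of_deg_lt_left (degLT_iff.1 hlow)]
      exact (WithTop.coe_le_coe.2 hδγ).trans hhigh.le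

end Approx

/-- `M_P` is a fixed point of `T_P`. -/
theorem MP_fixed_point {L : Language} (P : Program L) : TP P (MP P) = MP P := by
  have hfix : ∀ γ, depth P ≤ γ → γ < omega1 → eqa γ (TP P (MP P)) (MP P) := fun γ hδγ hγ =>
    (eqa_TP P (eqa_MP_approx hδγ hγ)).trans
      ((approx_spec hγ).2.symm.trans (eqa_MP_approx hδγ hγ).symm)
  refine eq_of_forall_eqa fun γ hγ => ?_
  rcases le_or_gt (depth P) γ with h | h
  · exact hfix γ h hγ
  · exact (hfix _ le_rfl depth_spec.1).mono h.le

end ILP
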